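/- If every proper sub-collection of size between 2 and n-1 of the discrete random variables X1,...,Xn is mutually independent, then I_n(X1;...;Xn) = (-1)^{n-1} H(X1,...,Xn) + (-1)^n (H(X1)+...+H(Xn)). Consequently, under this hypothesis I_n = 0 if and only if X1,...,Xn are mutually independent. -/
import Mathlib


open Finset

noncomputable def negMulLog2 (x : ℝ) : ℝ := -(x * Real.logb 2 x)

noncomputable def prob {Ω α : Type*} [Fintype Ω] [DecidableEq α]
    (p : Ω → ℝ) (X : Ω → α) (x : α) : ℝ :=
  ∑ ω : Ω, if X ω = x then p ω else 0

noncomputable def ent {Ω α : Type*} [Fintype Ω] [Fintype α] [DecidableEq α]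
    (p : Ω → ℝ) (X : Ω → α) : ℝ :=
  ∑ x : α, negMulLog2 (prob p X x)

noncomputable def condp {Ω γ : Type*} [Fintype Ω] [DecidableEq γ]
    (p : Ω → ℝ) (Z : Ω → γ) (z : γ) : Ω → ℝ :=
  fun ω => if Z ω = z then p ω / prob p Z z else 0

noncomputable def I2 {Ω α β : Type*} [Fintype Ω] [Fintype α] [DecidableEq α]
    [Fintype β] [DecidableEq β]
    (p : Ω → ℝ) (X : Ω → α) (Y : Ω → β) : ℝ :=
  ent p X + ent p Y - ent p (fun ω => (X ω, Y ω))

noncomputable def condI2 {Ω α β γ : Type*} [Fintype Ω] [Fintype α] [DecidableEq α]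
    [Fintype β] [DecidableEq β] [Fintype γ] [DecidableEq γ]
    (p : Ω → ℝ) (X : Ω → α) (Y : Ω → β) (Z : Ω → γ) : ℝ :=
  ∑ z : γ, prob p Z z * I2 (condp p Z z) X Y

noncomputable def I3 {Ω α β γ : Type*} [Fintype Ω] [Fintype α] [DecidableEq α]
    [Fintype β] [DecidableEq β] [Fintype γ] [DecidableEq γ]
    (p : Ω → ℝ) (X : Ω → α) (Y : Ω → β) (Z : Ω → γ) : ℝ :=
  ent p X + ent p Y + ent p Z
    - ent p (fun ω => (X ω, Y ω)) - ent p (fun ω => (X ω, Z ω))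
    - ent p (fun ω => (Y ω, Z ω))
    + ent p (fun ω => (X ω, Y ω, Z ω))

noncomputable def jointEnt {Ω ι : Type*} [Fintype Ω] [Fintype ι] [DecidableEq ι]
    {α : ι → Type*} [∀ i, Fintype (α i)] [∀ i, DecidableEq (α i)]
    (p : Ω → ℝ) (X : ∀ i, Ω → α i) (J : Finset ι) : ℝ :=
  ent p (fun ω => (fun i : J => X i.1 ω))

noncomputable def Imulti {Ω ι : Type*} [Fintype Ω] [Fintype ι] [DecidableEq ι]
    {α : ι → Type*} [∀ i, Fintype (α i)] [∀ i, DecidableEq (α i)]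
    (p : Ω → ℝ) (X : ∀ i, Ω → α i) (S : Finset ι) : ℝ :=
  ∑ J ∈ S.powerset, if J = ∅ then 0 else (-1 : ℝ) ^ (J.card + 1) * jointEnt p X J

section Aux

variable {Ω : Type*} [Fintype Ω]

lemma negMulLog2_zero : negMulLog2 0 = 0 := by simp [negMulLog2]

lemma prob_nonneg {α : Type*} [DecidableEq α] {p : Ω → ℝ} (hp : ∀ ω, 0 ≤ p ω)
    (X : Ω → α) (x : α) : 0 ≤ prob p X x := by
  refine Finset.sum_nonneg fun ω _ => ?_
  split
  · exact hp ω
  · exact le_rfl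

lemma sum_prob {α : Type*} [Fintype α] [DecidableEq α] {p : Ω → ℝ} (hs : ∑ ω, p ω = 1)
    (X : Ω → α) : ∑ x, prob p X x = 1 := by
  simp only [prob]
  rw [Finset.sum_comm]
  simp [hs]

lemma ent_comp_inj {α β : Type*} [Fintype α] [DecidableEq α] [Fintype β] [DecidableEq β]
    (p : Ω → ℝ) (X : Ω → α) (g : α → β) (hg : Function.Injective g) :
    ent p (fun ω => g (X ω)) = ent p X := by
  have h1 : ∀ x, prob p (fun ω => g (X ω)) (g x) = prob p X x := by
    intro x
    unfold prob
    refine Finset.sum_congr rfl fun ω _ => ?_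
    simp [hg.eq_iff]
  have h2 : ∀ y, y ∉ Finset.image g Finset.univ → prob p (fun ω => g (X ω)) y = 0 := by
    intro y hy
    refine Finset.sum_eq_zero fun ω _ => ?_
    have : g (X ω) ≠ y := fun h => hy (by simp [← h])
    simp [this]
  unfold ent
  rw [← Finset.sum_subset (Finset.subset_univ (Finset.image g Finset.univ))
    (fun y _ hy => by rw [h2 y hy, negMulLog2_zero])]
  rw [Finset.sum_image (fun a _ b _ h => hg h)]
  exact Finset.sum_congr rfl fun x _ => by rw [h1]

def singCast {ι : Type*} [DecidableEq ι] {α : ι → Type*} (i : ι) (a : α i) :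
    ∀ j : ({i} : Finset ι), α j.1 :=
  fun j => cast (congrArg α (Finset.mem_singleton.mp j.2)).symm a

set_option maxHeartbeats 1000000 in
lemma jointEnt_singleton {ι : Type*} [Fintype ι] [DecidableEq ι] {α : ι → Type*}
    [∀ i, Fintype (α i)] [∀ i, DecidableEq (α i)] (p : Ω → ℝ) (X : ∀ i, Ω → α i) (i : ι) :
    jointEnt p X {i} = ent p (X i) := by
  unfold jointEnt
  have hE : (fun ω => (fun j : ({i} : Finset ι) => X j.1 ω)) =
      fun ω => singCast i (X i ω) := by
    funext ω
    funext j
    obtain ⟨j, hj⟩ := j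
    have h : j = i := Finset.mem_singleton.mp hj
    subst h
    exact (cast_eq _ _).symm
  rw [hE]
  exact ent_comp_inj p (X i) (singCast i) (fun a b h => by
    have := congrFun h ⟨i, Finset.mem_singleton_self i⟩
    exact (cast_inj _).mp this)

lemma jointEnt_univ {ι : Type*} [Fintype ι] [DecidableEq ι] {α : ι → Type*}
    [∀ i, Fintype (α i)] [∀ i, DecidableEq (α i)] (p : Ω → ℝ) (X : ∀ i, Ω → α i) :
    jointEnt p X Finset.univ = ent p (fun ω => (fun i => X i ω : ∀ i, α i)) := by
  unfold jointEnt
  have hE : (fun ω => (fun j : (Finset.univ : Finset ι) => X j.1 ω)) =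
      fun ω => (fun f : ∀ i, α i => (fun j : (Finset.univ : Finset ι) => f j.1))
        ((fun i => X i ω : ∀ i, α i)) := rfl
  rw [hE]
  exact ent_comp_inj p (fun ω => (fun i => X i ω : ∀ i, α i))
    (fun f : ∀ i, α i => fun j : (Finset.univ : Finset ι) => f j.1)
    (fun a b h => funext fun i => congrFun h ⟨i, Finset.mem_univ i⟩)

end Aux
section Joint
set_option linter.unusedSectionVars false

variable {Ω ι : Type*} [Fintype Ω] [Fintype ι] [DecidableEq ι]
  {α : ι → Type*} [∀ i, Fintype (α i)] [∀ i, DecidableEq (α i)]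
  (p : Ω → ℝ) (X : ∀ i, Ω → α i)

lemma prob_joint_le (hp : ∀ ω, 0 ≤ p ω) (f : ∀ i, α i) (i : ι) :
    prob p (fun ω j => X j ω) f ≤ prob p (X i) (f i) := by
  refine Finset.sum_le_sum fun ω _ => ?_
  by_cases h : (fun j => X j ω) = f
  · rw [if_pos h, if_pos (congrFun h i)]
  · rw [if_neg h]
    split
    · exact hp ω
    · exact le_rfl

lemma marginal (i : ι) (x : α i) :
    (∑ f : ∀ j, α j, if f i = x then prob p (fun ω j => X j ω) f else 0)
      = prob p (X i) x := by
  have key : ∀ ω : Ω, (∑ f : ∀ j, α j,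
      if f i = x then (if (fun j => X j ω) = f then p ω else 0) else 0)
      = (if X i ω = x then p ω else 0) := by
    intro ω
    rw [Finset.sum_eq_single (fun j => X j ω)
      (fun f _ hf => by rw [if_neg (fun h : (fun j => X j ω) = f => hf h.symm), ite_self])
      (fun h => absurd (Finset.mem_univ _) h)]
    simp
  calc (∑ f : ∀ j, α j, if f i = x then prob p (fun ω j => X j ω) f else 0)
      = ∑ f : ∀ j, α j, ∑ ω,
          (if f i = x then (if (fun j => X j ω) = f then p ω else 0) else 0) := by
        refine Finset.sum_congr rfl fun f _ => ?_
        unfold prob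
        split
        · rfl
        · exact Finset.sum_const_zero.symm
    _ = ∑ ω, ∑ f : ∀ j, α j,
          (if f i = x then (if (fun j => X j ω) = f then p ω else 0) else 0) :=
        Finset.sum_comm
    _ = ∑ ω, (if X i ω = x then p ω else 0) := Finset.sum_congr rfl fun ω _ => key ω
    _ = prob p (X i) x := rfl

lemma sum_joint_mul (i : ι) (c : α i → ℝ) :
    ∑ f : ∀ j, α j, prob p (fun ω j => X j ω) f * c (f i)
      = ∑ x : α i, prob p (X i) x * c x := by
  have h1 : ∀ f : ∀ j, α j,
      (∑ x : α i, (if f i = x then prob p (fun ω j => X j ω) f else 0) * c x)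
      = prob p (fun ω j => X j ω) f * c (f i) := by
    intro f
    simp only [ite_mul, zero_mul]
    rw [Finset.sum_ite_eq]
    simp
  calc ∑ f : ∀ j, α j, prob p (fun ω j => X j ω) f * c (f i)
      = ∑ f : ∀ j, α j, ∑ x : α i,
          (if f i = x then prob p (fun ω j => X j ω) f else 0) * c x :=
        Finset.sum_congr rfl fun f _ => (h1 f).symm
    _ = ∑ x : α i, ∑ f : ∀ j, α j,
          (if f i = x then prob p (fun ω j => X j ω) f else 0) * c x := Finset.sum_comm
    _ = ∑ x : α i, (∑ f : ∀ j, α j,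
          (if f i = x then prob p (fun ω j => X j ω) f else 0)) * c x :=
        Finset.sum_congr rfl fun x _ => (Finset.sum_mul _ _ _).symm
    _ = ∑ x : α i, prob p (X i) x * c x := by
        refine Finset.sum_congr rfl fun x _ => ?_
        rw [marginal]

lemma sum_prod_marg (hs : ∑ ω, p ω = 1) :
    ∑ f : ∀ i, α i, ∏ i, prob p (X i) (f i) = 1 := by
  rw [← Fintype.prod_sum (fun i x => prob p (X i) x)]
  rw [Finset.prod_congr rfl (fun i _ => sum_prob hs (X i)), Finset.prod_const_one]

lemma sum_ent_eq (hp : ∀ ω, 0 ≤ p ω) :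
    ∑ i, ent p (X i) = -∑ f : ∀ i, α i,
      prob p (fun ω j => X j ω) f * Real.logb 2 (∏ i, prob p (X i) (f i)) := by
  have hstep : ∀ f : ∀ i, α i,
      prob p (fun ω j => X j ω) f * Real.logb 2 (∏ i, prob p (X i) (f i))
      = ∑ i, prob p (fun ω j => X j ω) f * Real.logb 2 (prob p (X i) (f i)) := by
    intro f
    by_cases hq : prob p (fun ω j => X j ω) f = 0
    · simp [hq]
    · have hqpos : 0 < prob p (fun ω j => X j ω) f :=
        lt_of_le_of_ne (prob_nonneg hp _ _) (Ne.symm hq)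
      rw [Real.logb_prod _ _
        (fun i _ => ne_of_gt (lt_of_lt_of_le hqpos (prob_joint_le p X hp f i)))]
      rw [Finset.mul_sum]
  rw [show (∑ f : ∀ i, α i,
      prob p (fun ω j => X j ω) f * Real.logb 2 (∏ i, prob p (X i) (f i)))
      = ∑ f : ∀ i, α i, ∑ i,
        prob p (fun ω j => X j ω) f * Real.logb 2 (prob p (X i) (f i))
    from Finset.sum_congr rfl fun f _ => hstep f]
  rw [Finset.sum_comm]
  rw [show (∑ i, ∑ f : ∀ j, α j,
      prob p (fun ω j => X j ω) f * Real.logb 2 (prob p (X i) (f i)))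
      = ∑ i, ∑ x : α i, prob p (X i) x * Real.logb 2 (prob p (X i) x)
    from Finset.sum_congr rfl fun i _ =>
      sum_joint_mul p X i (fun x => Real.logb 2 (prob p (X i) x))]
  unfold ent negMulLog2
  rw [← Finset.sum_neg_distrib]
  refine Finset.sum_congr rfl fun i _ => ?_
  rw [← Finset.sum_neg_distrib]

end Joint
section Gibbs
set_option linter.unusedSectionVars false

variable {Ω ι : Type*} [Fintype Ω] [Fintype ι] [DecidableEq ι]
  {α : ι → Type*} [∀ i, Fintype (α i)] [∀ i, DecidableEq (α i)]

lemma key_iff (p : Ω → ℝ) (X : ∀ i, Ω → α i) (hp : ∀ ω, 0 ≤ p ω) (hs : ∑ ω, p ω = 1) :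
    (jointEnt p X Finset.univ = ∑ i, ent p (X i)) ↔
      ∀ f : ∀ i, α i, prob p (fun ω j => X j ω) f = ∏ i, prob p (X i) (f i) := by
  set q : (∀ i, α i) → ℝ := fun f => prob p (fun ω j => X j ω) f with hqdef
  set r : (∀ i, α i) → ℝ := fun f => ∏ i, prob p (X i) (f i) with hrdef
  set t : (∀ i, α i) → ℝ :=
    fun f => q f * Real.log (r f) - q f * Real.log (q f) - r f + q f with htdef
  have hq0 : ∀ f, 0 ≤ q f := fun f => prob_nonneg hp _ f
  have hr0 : ∀ f, 0 ≤ r f := fun f => Finset.prod_nonneg fun i _ => prob_nonneg hp _ _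
  have hrq : ∀ f, r f = 0 → q f = 0 := by
    intro f h
    obtain ⟨i, _, hi⟩ := Finset.prod_eq_zero_iff.mp h
    exact le_antisymm (hi ▸ prob_joint_le p X hp f i) (hq0 f)
  have ht : ∀ f, t f ≤ 0 := by
    intro f
    by_cases hq : q f = 0
    · simp only [htdef, hq, zero_mul, zero_sub, zero_add, sub_zero]
      linarith [hr0 f]
    · have hqpos : 0 < q f := lt_of_le_of_ne (hq0 f) (Ne.symm hq)
      have hrpos : 0 < r f := lt_of_le_of_ne (hr0 f) (fun h => hq (hrq f h.symm))
      have hlog : Real.log (r f / q f) ≤ r f / q f - 1 :=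
        Real.log_le_sub_one_of_pos (div_pos hrpos hqpos)
      have hd : Real.log (r f / q f) = Real.log (r f) - Real.log (q f) :=
        Real.log_div hrpos.ne' hqpos.ne'
      have h2 : q f * Real.log (r f / q f) ≤ q f * (r f / q f - 1) :=
        mul_le_mul_of_nonneg_left hlog (le_of_lt hqpos)
      have h3 : q f * (r f / q f - 1) = r f - q f := by field_simp
      simp only [htdef]
      rw [hd] at h2
      nlinarith
  have hsumq : ∑ f, q f = 1 := sum_prob hs _
  have hsumr : ∑ f, r f = 1 := sum_prod_marg p X hs
  have hHu : jointEnt p X Finset.univ = ∑ f, negMulLog2 (q f) := by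
    rw [jointEnt_univ]; rfl
  have hlog2 : Real.log 2 ≠ 0 := (Real.log_pos one_lt_two).ne'
  have hlogb : ∀ x : ℝ, Real.logb 2 x * Real.log 2 = Real.log x := by
    intro x
    rw [Real.logb]
    field_simp
  have hsumt : ∑ f, t f = Real.log 2 * (jointEnt p X Finset.univ - ∑ i, ent p (X i)) := by
    have e1 : ∑ f, q f * Real.log (q f) = -(Real.log 2 * jointEnt p X Finset.univ) := by
      rw [hHu, Finset.mul_sum, ← Finset.sum_neg_distrib]
      refine Finset.sum_congr rfl fun f _ => ?_
      unfold negMulLog2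
      rw [← hlogb (q f)]
      ring
    have e2 : ∑ f, q f * Real.log (r f) = -(Real.log 2 * ∑ i, ent p (X i)) := by
      have hA := sum_ent_eq p X hp
      have : ∑ f, q f * Real.logb 2 (r f) = -∑ i, ent p (X i) := by
        rw [hA]; ring
      calc ∑ f, q f * Real.log (r f) = ∑ f, (q f * Real.logb 2 (r f)) * Real.log 2 := by
            refine Finset.sum_congr rfl fun f _ => ?_
            rw [mul_assoc, hlogb]
        _ = (∑ f, q f * Real.logb 2 (r f)) * Real.log 2 := (Finset.sum_mul _ _ _).symm
        _ = -(Real.log 2 * ∑ i, ent p (X i)) := by rw [this]; ring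
    have expand : ∑ f, t f = (∑ f, q f * Real.log (r f)) - (∑ f, q f * Real.log (q f))
        - (∑ f, r f) + (∑ f, q f) := by
      simp only [htdef]
      rw [Finset.sum_add_distrib, Finset.sum_sub_distrib, Finset.sum_sub_distrib]
    rw [expand, e1, e2, hsumq, hsumr]
    ring
  constructor
  · intro h f
    have hzero : ∑ f, t f = 0 := by rw [hsumt, h]; ring
    have hall := (Finset.sum_eq_zero_iff_of_nonpos (fun f _ => ht f)).mp hzero
    have htf := hall f (Finset.mem_univ f)
    by_cases hqz : q f = 0
    · have : r f = 0 := by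
        simp only [htdef, hqz, zero_mul, zero_sub, zero_add, sub_zero] at htf
        linarith
      show q f = r f
      rw [hqz, this]
    · have hqpos : 0 < q f := lt_of_le_of_ne (hq0 f) (Ne.symm hqz)
      have hrpos : 0 < r f := lt_of_le_of_ne (hr0 f) (fun h => hqz (hrq f h.symm))
      by_contra hne
      have hne' : r f / q f ≠ 1 := by
        intro h1
        exact hne ((div_eq_one_iff_eq hqpos.ne').mp h1).symm
      have hlog : Real.log (r f / q f) < r f / q f - 1 :=
        Real.log_lt_sub_one_of_pos (div_pos hrpos hqpos) hne'
      have hd : Real.log (r f / q f) = Real.log (r f) - Real.log (q f) :=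
        Real.log_div hrpos.ne' hqpos.ne'
      have h2 : q f * Real.log (r f / q f) < q f * (r f / q f - 1) :=
        mul_lt_mul_of_pos_left hlog hqpos
      have h3 : q f * (r f / q f - 1) = r f - q f := by field_simp
      rw [hd] at h2
      have : t f < 0 := by simp only [htdef]; nlinarith
      linarith [htf ▸ this]
  · intro h
    have hzero : ∑ f, t f = 0 := by
      refine Finset.sum_eq_zero fun f _ => ?_
      simp only [htdef]
      have hqr : q f = r f := h f
      rw [hqr]
      ring
    rw [hzero] at hsumt
    have := (mul_eq_zero.mp hsumt.symm).resolve_left hlog2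
    linarith [this]

end Gibbs
section Comb

lemma inner_alt {n : ℕ} (hn : 2 ≤ n) (i : Fin n) :
    ∑ J ∈ (Finset.univ : Finset (Fin n)).powerset,
      (if i ∈ J then (-1 : ℝ) ^ (J.card + 1) else 0) = 0 := by
  have hins : (Finset.univ : Finset (Fin n)) = insert i (Finset.univ.erase i) :=
    (Finset.insert_erase (Finset.mem_univ i)).symm
  rw [hins, Finset.sum_powerset_insert (Finset.notMem_erase i _)]
  have hz : ∀ t ∈ ((Finset.univ : Finset (Fin n)).erase i).powerset,
      (if i ∈ t then (-1 : ℝ) ^ (t.card + 1) else 0) = 0 := by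
    intro t ht
    rw [if_neg (fun hit => Finset.notMem_erase i _ (Finset.mem_powerset.mp ht hit))]
  have h2 : ∀ t ∈ ((Finset.univ : Finset (Fin n)).erase i).powerset,
      (if i ∈ insert i t then (-1 : ℝ) ^ ((insert i t).card + 1) else 0)
        = (-1 : ℝ) ^ t.card := by
    intro t ht
    rw [if_pos (Finset.mem_insert_self i t),
      Finset.card_insert_of_notMem
        (fun hit => Finset.notMem_erase i _ (Finset.mem_powerset.mp ht hit))]
    rw [pow_succ, pow_succ]
    ring
  rw [Finset.sum_congr rfl hz, Finset.sum_const_zero, zero_add,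
    Finset.sum_congr rfl h2]
  have hne : ((Finset.univ : Finset (Fin n)).erase i).Nonempty := by
    rw [← Finset.card_pos, Finset.card_erase_of_mem (Finset.mem_univ i)]
    simp only [Finset.card_univ, Fintype.card_fin]
    omega
  have hz2 := Finset.sum_powerset_neg_one_pow_card_of_nonempty hne
  calc ∑ t ∈ ((Finset.univ : Finset (Fin n)).erase i).powerset, ((-1 : ℝ)) ^ t.card
      = ((∑ t ∈ ((Finset.univ : Finset (Fin n)).erase i).powerset,
          (-1 : ℤ) ^ t.card : ℤ) : ℝ) := by push_cast; rfl
    _ = 0 := by rw [hz2]; exact Int.cast_zero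

lemma alt_sum_zero {n : ℕ} (hn : 2 ≤ n) (h : Fin n → ℝ) :
    ∑ J ∈ (Finset.univ : Finset (Fin n)).powerset,
      (-1 : ℝ) ^ (J.card + 1) * ∑ i ∈ J, h i = 0 := by
  calc ∑ J ∈ (Finset.univ : Finset (Fin n)).powerset,
        (-1 : ℝ) ^ (J.card + 1) * ∑ i ∈ J, h i
      = ∑ J ∈ (Finset.univ : Finset (Fin n)).powerset,
          ∑ i : Fin n, (if i ∈ J then (-1 : ℝ) ^ (J.card + 1) * h i else 0) := by
        refine Finset.sum_congr rfl fun J hJ => ?_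
        rw [Finset.mul_sum]
        rw [show (∑ i ∈ J, (-1 : ℝ) ^ (J.card + 1) * h i)
            = ∑ i : Fin n, (if i ∈ J then (-1 : ℝ) ^ (J.card + 1) * h i else 0) by
          rw [Finset.sum_ite_mem, Finset.univ_inter]]
    _ = ∑ i : Fin n, ∑ J ∈ (Finset.univ : Finset (Fin n)).powerset,
          (if i ∈ J then (-1 : ℝ) ^ (J.card + 1) * h i else 0) := Finset.sum_comm
    _ = ∑ i : Fin n, (∑ J ∈ (Finset.univ : Finset (Fin n)).powerset,
          (if i ∈ J then (-1 : ℝ) ^ (J.card + 1) else 0)) * h i := by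
        refine Finset.sum_congr rfl fun i _ => ?_
        rw [Finset.sum_mul]
        refine Finset.sum_congr rfl fun J _ => ?_
        rw [ite_mul, zero_mul]
    _ = 0 := by
        refine Finset.sum_eq_zero fun i _ => ?_
        rw [inner_alt hn i, zero_mul]

end Comb
theorem stmt10 {Ω : Type*} [Fintype Ω] {n : ℕ} (hn : 2 ≤ n)
    {α : Fin n → Type*} [∀ i, Fintype (α i)] [∀ i, DecidableEq (α i)]
    (p : Ω → ℝ) (hp : ∀ ω, 0 ≤ p ω) (hs : ∑ ω, p ω = 1)
    (X : ∀ i, Ω → α i)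
    (hsub : ∀ S : Finset (Fin n), 2 ≤ S.card → S.card ≤ n - 1 →
      jointEnt p X S = ∑ i ∈ S, ent p (X i)) :
    Imulti p X Finset.univ =
        (-1 : ℝ) ^ (n - 1) * jointEnt p X Finset.univ +
          (-1 : ℝ) ^ n * ∑ i, ent p (X i) ∧
      (Imulti p X Finset.univ = 0 ↔
        ∀ f : ∀ i, α i, prob p (fun ω i => X i ω) f = ∏ i, prob p (X i) (f i)) := by
  have hn1 : n - 1 + 1 = n := by omega
  have epow : (-1 : ℝ) ^ n = -(-1 : ℝ) ^ (n - 1) := by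
    conv_lhs => rw [← hn1]
    rw [pow_succ]
    ring
  have hproper : ∀ J ∈ (Finset.univ : Finset (Fin n)).powerset, J ≠ Finset.univ →
      (if J = ∅ then (0 : ℝ) else (-1 : ℝ) ^ (J.card + 1) * jointEnt p X J)
        = (-1 : ℝ) ^ (J.card + 1) * ∑ i ∈ J, ent p (X i) := by
    intro J hJ hnu
    by_cases hne : J = ∅
    · subst hne; simp
    · rw [if_neg hne]
      congr 1
      have hpos : 0 < J.card := Finset.card_pos.mpr (Finset.nonempty_iff_ne_empty.mpr hne)
      by_cases h1 : J.card = 1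
      · obtain ⟨i, rfl⟩ := Finset.card_eq_one.mp h1
        rw [jointEnt_singleton, Finset.sum_singleton]
      · have h2 : 2 ≤ J.card := by omega
        have hlt : J.card < n := by
          have := Finset.card_strictMono
            (lt_of_le_of_ne (Finset.mem_powerset.mp hJ) hnu)
          simpa using this
        exact hsub J h2 (by omega)
  have hcardu : (Finset.univ : Finset (Fin n)).card = n := by simp
  have hunivne : (Finset.univ : Finset (Fin n)) ≠ ∅ :=
    Finset.nonempty_iff_ne_empty.mp ⟨⟨0, by omega⟩, Finset.mem_univ _⟩
  have part1 : Imulti p X Finset.univ =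
      (-1 : ℝ) ^ (n - 1) * jointEnt p X Finset.univ +
        (-1 : ℝ) ^ n * ∑ i, ent p (X i) := by
    unfold Imulti
    rw [← Finset.sum_erase_add _ _ (Finset.mem_powerset_self
      (Finset.univ : Finset (Fin n)))]
    rw [if_neg hunivne]
    have hstep : ∑ J ∈ ((Finset.univ : Finset (Fin n)).powerset.erase Finset.univ),
        (if J = ∅ then (0 : ℝ) else (-1 : ℝ) ^ (J.card + 1) * jointEnt p X J)
        = ∑ J ∈ ((Finset.univ : Finset (Fin n)).powerset.erase Finset.univ),
          (-1 : ℝ) ^ (J.card + 1) * ∑ i ∈ J, ent p (X i) :=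
      Finset.sum_congr rfl fun J hJ =>
        hproper J (Finset.mem_of_mem_erase hJ) (Finset.ne_of_mem_erase hJ)
    rw [hstep]
    have herase := Finset.sum_erase_add ((Finset.univ : Finset (Fin n)).powerset)
      (fun J => (-1 : ℝ) ^ (J.card + 1) * ∑ i ∈ J, ent p (X i))
      (Finset.mem_powerset_self (Finset.univ : Finset (Fin n)))
    rw [alt_sum_zero hn (fun i => ent p (X i))] at herase
    simp only [hcardu] at herase ⊢
    have hfin : (-1 : ℝ) ^ (n + 1) = (-1 : ℝ) ^ (n - 1) := by
      rw [pow_succ, epow]; ring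
    rw [hfin] at herase
    have : (∑ J ∈ ((Finset.univ : Finset (Fin n)).powerset.erase Finset.univ),
        (-1 : ℝ) ^ (J.card + 1) * ∑ i ∈ J, ent p (X i))
        = -((-1 : ℝ) ^ (n - 1) * ∑ i, ent p (X i)) := by linarith
    rw [this, hfin, epow]
    ring
  refine ⟨part1, ?_⟩
  have hfac := key_iff p X hp hs
  have hpow : (-1 : ℝ) ^ (n - 1) ≠ 0 := pow_ne_zero _ (by norm_num)
  constructor
  · intro h0
    rw [part1, epow] at h0
    have hml : (-1 : ℝ) ^ (n - 1) *
        (jointEnt p X Finset.univ - ∑ i, ent p (X i)) = 0 := by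
      rw [mul_sub]; linarith
    have := (mul_eq_zero.mp hml).resolve_left hpow
    exact hfac.mp (by linarith)
  · intro hfactor
    have hHuS : jointEnt p X Finset.univ = ∑ i, ent p (X i) := hfac.mpr hfactor
    rw [part1, hHuS, epow]
    ring
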